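/- arXiv:1806.04791 — 3 statements merged into one kernel-verified Lean document; each statement's English description precedes it below -/
import Mathlib

section
/- For |q|<1, the sum over n≥0 of (q;q²)_n · qⁿ / (-q;q²)_{n+1} equals f(q⁴), where f(q) = Σ_{n≥0} (-1)ⁿ q^{n(n+1)/2}. -/
open Filter Finset

/-- The q-Pochhammer symbol `(a; q)_n = ∏_{j=0}^{n-1} (1 - a qʲ)`. -/
noncomputable def qPoch (a q : ℂ) (n : ℕ) : ℂ := ∏ j ∈ Finset.range n, (1 - a * q ^ j)

namespace RamanujanAux

lemma one_add_ne_zero {w : ℂ} (h : ‖w‖ < 1) : (1 : ℂ) + w ≠ 0 := by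
  intro hc
  have : w = -1 := by linear_combination hc
  rw [this] at h; simp at h

lemma norm_xpj {x p : ℂ} (hx : ‖x‖ < 1) (hp : ‖p‖ ≤ 1) (j : ℕ) : ‖x * p ^ j‖ < 1 := by
  rw [norm_mul, norm_pow]
  calc ‖x‖ * ‖p‖ ^ j ≤ ‖x‖ * 1 := by
        exact mul_le_mul_of_nonneg_left (pow_le_one₀ (norm_nonneg p) hp) (norm_nonneg x)
    _ < 1 := by simpa using hx

lemma qPoch_succ (a q : ℂ) (n : ℕ) : qPoch a q (n + 1) = qPoch a q n * (1 - a * q ^ n) :=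
  Finset.prod_range_succ _ n

lemma qPoch_succ' (a q : ℂ) (n : ℕ) : qPoch a q (n + 1) = (1 - a) * qPoch (a * q) q n := by
  unfold qPoch
  rw [Finset.prod_range_succ' (fun j => (1 - a * q ^ j)) n]
  simp only [pow_zero, mul_one]
  rw [mul_comm]
  congr 1
  apply Finset.prod_congr rfl
  intro j _
  ring

lemma qPoch_neg_ne_zero {x p : ℂ} (hx : ‖x‖ < 1) (hp : ‖p‖ ≤ 1) (n : ℕ) :
    qPoch (-x) p n ≠ 0 := by
  unfold qPoch
  apply Finset.prod_ne_zero_iff.2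
  intro j _
  have : (1 : ℂ) - (-x) * p ^ j = 1 + x * p ^ j := by ring
  rw [this]
  exact one_add_ne_zero (norm_xpj hx hp j)

noncomputable def Taux (x p : ℂ) (m : ℕ) : ℂ := qPoch x p m * x ^ m / qPoch (-x) p (m + 1)

noncomputable def Baux (x p : ℂ) (m : ℕ) : ℂ :=
  x ^ (m + 1) * qPoch (x * p) p m / qPoch (-x) p (m + 1)

lemma Taux_succ {x p : ℂ} (hx : ‖x‖ < 1) (hp : ‖p‖ ≤ 1) (m : ℕ) :
    Taux x p (m + 1) = Taux x p m * (x * (1 - x * p ^ m) / (1 + x * p ^ (m + 1))) := by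
  unfold Taux
  rw [qPoch_succ x p m, qPoch_succ (-x) p (m + 1)]
  have h1 : (1 : ℂ) - (-x) * p ^ (m + 1) = 1 + x * p ^ (m + 1) := by ring
  rw [h1]
  have hD := qPoch_neg_ne_zero hx hp (m + 1)
  have hU := one_add_ne_zero (norm_xpj hx hp (m + 1))
  field_simp
  ring

lemma Baux_succ {x p : ℂ} (hx : ‖x‖ < 1) (hp : ‖p‖ ≤ 1) (m : ℕ) :
    Baux x p (m + 1) = Baux x p m * (x * (1 - x * p ^ (m + 1)) / (1 + x * p ^ (m + 1))) := by
  unfold Baux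
  rw [qPoch_succ (x * p) p m, qPoch_succ (-x) p (m + 1)]
  have h1 : (1 : ℂ) - (-x) * p ^ (m + 1) = 1 + x * p ^ (m + 1) := by ring
  have h2 : (1 : ℂ) - (x * p) * p ^ m = 1 - x * p ^ (m + 1) := by ring
  rw [h1, h2]
  have hD := qPoch_neg_ne_zero hx hp (m + 1)
  have hU := one_add_ne_zero (norm_xpj hx hp (m + 1))
  field_simp
  ring

lemma ratio_bound {x p : ℂ} (hx : ‖x‖ < 1) (hp : ‖p‖ < 1) :
    ∀ᶠ m in atTop, ∀ k : ℕ, k = m ∨ k = m + 1 →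
      ‖x * (1 - x * p ^ k) / (1 + x * p ^ (m + 1))‖ ≤ (1 + ‖x‖) / 2 := by
  set ε : ℝ := (1 - ‖x‖) / 4 with hεdef
  have hε : 0 < ε := by
    linarith
  have htend : Tendsto (fun m : ℕ => ‖x‖ * ‖p‖ ^ m) atTop (nhds 0) := by
    have := (tendsto_pow_atTop_nhds_zero_of_lt_one (norm_nonneg p) hp).const_mul ‖x‖
    simpa using this
  have hev : ∀ᶠ m in atTop, ‖x‖ * ‖p‖ ^ m < ε := htend.eventually_lt_const hε
  rw [eventually_atTop] at hev ⊢
  obtain ⟨M, hM⟩ := hev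
  refine ⟨M, fun m hm k hk => ?_⟩
  have hkm : ‖x‖ * ‖p‖ ^ k < ε := by
    rcases hk with h | h
    · rw [h]; exact hM m hm
    · rw [h]; exact hM (m + 1) (le_trans hm (Nat.le_succ m))
  have hm1 : ‖x‖ * ‖p‖ ^ (m + 1) < ε := hM (m + 1) (le_trans hm (Nat.le_succ m))
  have hnum : ‖(1 : ℂ) - x * p ^ k‖ ≤ 1 + ε := by
    calc ‖(1 : ℂ) - x * p ^ k‖ ≤ ‖(1 : ℂ)‖ + ‖x * p ^ k‖ := norm_sub_le _ _
      _ = 1 + ‖x‖ * ‖p‖ ^ k := by rw [norm_one, norm_mul, norm_pow]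
      _ ≤ 1 + ε := by linarith
  have hden : 1 - ε ≤ ‖(1 : ℂ) + x * p ^ (m + 1)‖ := by
    have h := norm_add_le ((1 : ℂ) + x * p ^ (m + 1)) (-(x * p ^ (m + 1)))
    simp only [add_neg_cancel_right, norm_one, norm_neg] at h
    rw [norm_mul, norm_pow] at h
    linarith
  have hεq : ε ≤ 1 / 4 := by
    have := norm_nonneg x; rw [hεdef]; linarith
  have hdpos : (0 : ℝ) < 1 - ε := by linarith
  rw [norm_div, norm_mul]
  rw [div_le_iff₀ (lt_of_lt_of_le hdpos hden)]
  have key : ‖x‖ * (1 + ε) ≤ (1 + ‖x‖) / 2 * (1 - ε) := by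
    have h0 := norm_nonneg x
    rw [hεdef]
    nlinarith [sq_nonneg (1 - ‖x‖)]
  calc ‖x‖ * ‖(1 : ℂ) - x * p ^ k‖ ≤ ‖x‖ * (1 + ε) :=
        mul_le_mul_of_nonneg_left hnum (norm_nonneg x)
    _ ≤ (1 + ‖x‖) / 2 * (1 - ε) := key
    _ ≤ (1 + ‖x‖) / 2 * ‖(1 : ℂ) + x * p ^ (m + 1)‖ := by
        apply mul_le_mul_of_nonneg_left hden
        have := norm_nonneg x; linarith

lemma summable_Taux {x p : ℂ} (hx : ‖x‖ < 1) (hp : ‖p‖ < 1) : Summable (Taux x p) := by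
  apply summable_of_ratio_norm_eventually_le (r := (1 + ‖x‖) / 2) (by linarith)
  filter_upwards [ratio_bound hx hp] with m hm
  rw [Taux_succ hx hp.le m, norm_mul, mul_comm]
  exact mul_le_mul_of_nonneg_right (hm m (Or.inl rfl)) (norm_nonneg _)

lemma summable_Baux {x p : ℂ} (hx : ‖x‖ < 1) (hp : ‖p‖ < 1) : Summable (Baux x p) := by
  apply summable_of_ratio_norm_eventually_le (r := (1 + ‖x‖) / 2) (by linarith)
  filter_upwards [ratio_bound hx hp] with m hm
  rw [Baux_succ hx hp.le m, norm_mul, mul_comm]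
  exact mul_le_mul_of_nonneg_right (hm (m + 1) (Or.inr rfl)) (norm_nonneg _)

lemma key_ident {x p : ℂ} (hx : ‖x‖ < 1) (hp : ‖p‖ ≤ 1) (m : ℕ) :
    Baux x p m - Baux x p (m + 1)
      = Taux x p (m + 1) + x ^ 2 * p * Taux (x * p) p m := by
  have hxp : ‖x * p‖ < 1 := by
    calc ‖x * p‖ = ‖x * p ^ 1‖ := by rw [pow_one]
      _ < 1 := norm_xpj hx hp 1
  have h1x : (1 : ℂ) + x ≠ 0 := one_add_ne_zero hx
  have hu : (1 : ℂ) + x * p ^ (m + 1) ≠ 0 := one_add_ne_zero (norm_xpj hx hp (m + 1))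
  have hE : qPoch (-(x * p)) p m ≠ 0 := qPoch_neg_ne_zero hxp hp m
  -- rewrite all Pochhammers in terms of A := qPoch (x*p) p m and E := qPoch (-(x*p)) p m
  have e1 : qPoch (-x) p (m + 1) = (1 + x) * qPoch (-(x * p)) p m := by
    rw [qPoch_succ' (-x) p m, sub_neg_eq_add, neg_mul]
  have e2 : qPoch (-x) p (m + 2) = (1 + x) * (qPoch (-(x * p)) p m * (1 + x * p ^ (m + 1))) := by
    rw [qPoch_succ (-x) p (m + 1), e1]
    have : (1 : ℂ) - (-x) * p ^ (m + 1) = 1 + x * p ^ (m + 1) := by ring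
    rw [this]; ring
  have e3 : qPoch x p (m + 1) = (1 - x) * qPoch (x * p) p m := qPoch_succ' x p m
  have e4 : qPoch (x * p) p (m + 1) = qPoch (x * p) p m * (1 - x * p ^ (m + 1)) := by
    rw [qPoch_succ (x * p) p m]
    have : (1 : ℂ) - (x * p) * p ^ m = 1 - x * p ^ (m + 1) := by ring
    rw [this]
  have e5 : qPoch (-(x * p)) p (m + 1) = qPoch (-(x * p)) p m * (1 + x * p ^ (m + 1)) := by
    rw [qPoch_succ (-(x * p)) p m]
    have : (1 : ℂ) - (-(x * p)) * p ^ m = 1 + x * p ^ (m + 1) := by ring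
    rw [this]
  unfold Baux Taux
  rw [e1, e2, e3, e4, e5]
  field_simp
  ring

lemma Taux_zero {x : ℂ} (p : ℂ) : Taux x p 0 = 1 / (1 + x) := by
  unfold Taux qPoch
  simp [sub_neg_eq_add]

lemma Baux_zero {x : ℂ} (p : ℂ) : Baux x p 0 = x / (1 + x) := by
  unfold Baux qPoch
  simp [sub_neg_eq_add]

/-- Functional equation: Ψ(x) = 1 - x²p Ψ(xp). -/
lemma func_eq {x p : ℂ} (hx : ‖x‖ < 1) (hp : ‖p‖ < 1) :
    ∑' m, Taux x p m = 1 - x ^ 2 * p * ∑' m, Taux (x * p) p m := by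
  have hxp : ‖x * p‖ < 1 := by
    calc ‖x * p‖ = ‖x * p ^ 1‖ := by rw [pow_one]
      _ < 1 := norm_xpj hx hp.le 1
  have hT : Summable (Taux x p) := summable_Taux hx hp
  have hT2 : Summable (Taux (x * p) p) := summable_Taux hxp hp
  have hB : Summable (Baux x p) := summable_Baux hx hp
  have hB0 : Tendsto (Baux x p) atTop (nhds 0) := hB.tendsto_atTop_zero
  have hT1 : Summable (fun m => Taux x p (m + 1)) := (summable_nat_add_iff 1).2 hT
  -- telescoping has sum
  have hBsub : Summable (fun m => Baux x p m - Baux x p (m + 1)) :=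
    hB.sub ((summable_nat_add_iff 1).2 hB)
  have htel : HasSum (fun m => Baux x p m - Baux x p (m + 1)) (Baux x p 0) := by
    rw [hBsub.hasSum_iff_tendsto_nat]
    have heq : (fun n => ∑ i ∈ Finset.range n, (Baux x p i - Baux x p (i + 1)))
        = fun n => Baux x p 0 - Baux x p n := by
      funext n; exact Finset.sum_range_sub' (Baux x p) n
    rw [heq]
    simpa using tendsto_const_nhds.sub hB0
  have htel' : HasSum (fun m => Taux x p (m + 1) + x ^ 2 * p * Taux (x * p) p m)
      (Baux x p 0) := by
    have := htel
    rwa [funext (key_ident hx hp.le)] at this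
  have hsplit : HasSum (fun m => Taux x p (m + 1) + x ^ 2 * p * Taux (x * p) p m)
      ((∑' m, Taux x p (m + 1)) + x ^ 2 * p * ∑' m, Taux (x * p) p m) :=
    hT1.hasSum.add (hT2.hasSum.mul_left _)
  have heq : Baux x p 0 = (∑' m, Taux x p (m + 1)) + x ^ 2 * p * ∑' m, Taux (x * p) p m :=
    htel'.unique hsplit
  have hS1 : ∑' m, Taux x p (m + 1)
      = Baux x p 0 - x ^ 2 * p * ∑' m, Taux (x * p) p m :=
    eq_sub_of_add_eq heq.symm
  rw [Summable.tsum_eq_zero_add hT, hS1, Taux_zero p, Baux_zero p]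
  have h1x : (1 : ℂ) + x ≠ 0 := one_add_ne_zero hx
  field_simp
  ring

end RamanujanAux

namespace RamanujanAux

/-- Iterating the functional equation. -/
lemma chain {q : ℂ} (hq : ‖q‖ < 1) (N : ℕ) :
    ∑' m, Taux q (q ^ 2) m
      = (∑ n ∈ Finset.range N, (-1 : ℂ) ^ n * q ^ (2 * (n * (n + 1))))
        + (-1 : ℂ) ^ N * q ^ (2 * (N * (N + 1))) * ∑' m, Taux (q * (q ^ 2) ^ N) (q ^ 2) m := by
  have hp : ‖q ^ 2‖ < 1 := by
    rw [norm_pow]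
    calc ‖q‖ ^ 2 ≤ ‖q‖ * 1 := by nlinarith [norm_nonneg q]
      _ < 1 := by simpa using hq
  induction N with
  | zero => simp
  | succ N ih =>
    have hxN : ‖q * (q ^ 2) ^ N‖ < 1 := by
      calc ‖q * (q ^ 2) ^ N‖ = ‖q‖ * ‖q ^ 2‖ ^ N := by rw [norm_mul, norm_pow]
        _ ≤ ‖q‖ * 1 :=
            mul_le_mul_of_nonneg_left (pow_le_one₀ (norm_nonneg _) hp.le) (norm_nonneg q)
        _ < 1 := by simpa using hq
    rw [ih, func_eq hxN hp]
    rw [show q * (q ^ 2) ^ N * q ^ 2 = q * (q ^ 2) ^ (N + 1) from by ring]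
    rw [Finset.sum_range_succ]
    have hpow : (q * (q ^ 2) ^ N) ^ 2 * q ^ 2 * q ^ (2 * (N * (N + 1)))
        = q ^ (2 * ((N + 1) * (N + 2))) := by
      rw [show 2 * ((N + 1) * (N + 2)) = 2 * (N * (N + 1)) + (4 * N + 4) from by ring,
        pow_add]
      ring
    have hsgn : ((-1 : ℂ)) ^ (N + 1) = -(-1 : ℂ) ^ N := by rw [pow_succ]; ring
    rw [hsgn]
    linear_combination (-(-1 : ℂ) ^ N * ∑' m, Taux (q * (q ^ 2) ^ (N + 1)) (q ^ 2) m) * hpow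

/-- Uniform bound on Ψ(x) in the small regime. -/
lemma psi_bound {x p : ℂ} (hx : ‖x‖ ≤ 1 / 8) (hp : ‖p‖ ≤ 1) :
    ‖∑' m, Taux x p m‖ ≤ 3 := by
  have hx1 : ‖x‖ < 1 := lt_of_le_of_lt hx (by norm_num)
  have hterm : ∀ m, ‖Taux x p m‖ ≤ 2 * (1 / 4 : ℝ) ^ m := by
    intro m
    have hA : ‖qPoch x p m‖ ≤ (9 / 8 : ℝ) ^ m := by
      unfold qPoch
      rw [norm_prod]
      calc ∏ j ∈ Finset.range m, ‖(1 : ℂ) - x * p ^ j‖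
          ≤ ∏ _j ∈ Finset.range m, (9 / 8 : ℝ) := by
            apply Finset.prod_le_prod
            · intro j _; exact norm_nonneg _
            · intro j _
              calc ‖(1 : ℂ) - x * p ^ j‖ ≤ ‖(1 : ℂ)‖ + ‖x * p ^ j‖ := norm_sub_le _ _
                _ = 1 + ‖x‖ * ‖p‖ ^ j := by rw [norm_one, norm_mul, norm_pow]
                _ ≤ 1 + (1 / 8) * 1 := by
                    have h1 : ‖x‖ * ‖p‖ ^ j ≤ (1 / 8) * 1 := by
                      apply mul_le_mul hx (pow_le_one₀ (norm_nonneg p) hp)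
                        (by positivity) (by norm_num)
                    linarith
                _ = 9 / 8 := by norm_num
        _ = (9 / 8 : ℝ) ^ m := by rw [Finset.prod_const, Finset.card_range]
    have hD : (7 / 8 : ℝ) ^ (m + 1) ≤ ‖qPoch (-x) p (m + 1)‖ := by
      unfold qPoch
      rw [norm_prod]
      calc ((7 / 8 : ℝ)) ^ (m + 1) = ∏ _j ∈ Finset.range (m + 1), (7 / 8 : ℝ) := by
            rw [Finset.prod_const, Finset.card_range]
        _ ≤ ∏ j ∈ Finset.range (m + 1), ‖(1 : ℂ) - (-x) * p ^ j‖ := by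
            apply Finset.prod_le_prod
            · intro j _; norm_num
            · intro j _
              have hxpj : ‖x * p ^ j‖ ≤ 1 / 8 := by
                rw [norm_mul, norm_pow]
                calc ‖x‖ * ‖p‖ ^ j ≤ (1 / 8) * 1 :=
                    mul_le_mul hx (pow_le_one₀ (norm_nonneg p) hp) (by positivity)
                      (by norm_num)
                  _ = 1 / 8 := by norm_num
              have he : (1 : ℂ) - (-x) * p ^ j = 1 + x * p ^ j := by ring
              rw [he]
              have h := norm_add_le ((1 : ℂ) + x * p ^ j) (-(x * p ^ j))
              simp only [add_neg_cancel_right, norm_one, norm_neg] at h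
              linarith
    have hxm : ‖x ^ m‖ ≤ (1 / 8 : ℝ) ^ m := by
      rw [norm_pow]; exact pow_le_pow_left₀ (norm_nonneg x) hx m
    have hDpos : (0 : ℝ) < ‖qPoch (-x) p (m + 1)‖ :=
      lt_of_lt_of_le (by positivity) hD
    unfold Taux
    rw [norm_div, norm_mul]
    rw [div_le_iff₀ hDpos]
    calc ‖qPoch x p m‖ * ‖x ^ m‖ ≤ (9 / 8 : ℝ) ^ m * (1 / 8 : ℝ) ^ m := by
          apply mul_le_mul hA hxm (norm_nonneg _) (by positivity)
      _ = (9 / 64 : ℝ) ^ m := by rw [← mul_pow]; norm_num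
      _ ≤ 2 * (1 / 4 : ℝ) ^ m * (7 / 8 : ℝ) ^ (m + 1) := by
          rw [pow_succ]
          have h1 : (9 / 64 : ℝ) ^ m ≤ (7 / 32 : ℝ) ^ m :=
            pow_le_pow_left₀ (by norm_num) (by norm_num) m
          have h2 : ((1 / 4 : ℝ)) ^ m * ((7 / 8 : ℝ)) ^ m = (7 / 32 : ℝ) ^ m := by
            rw [← mul_pow]; norm_num
          nlinarith [pow_nonneg (show (0:ℝ) ≤ 7/32 from by norm_num) m]
      _ ≤ 2 * (1 / 4 : ℝ) ^ m * ‖qPoch (-x) p (m + 1)‖ := by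
          apply mul_le_mul_of_nonneg_left hD (by positivity)
  have hgeo : Summable (fun m : ℕ => 2 * (1 / 4 : ℝ) ^ m) :=
    (summable_geometric_of_lt_one (by norm_num) (by norm_num)).mul_left 2
  have hnorm : Summable (fun m => ‖Taux x p m‖) :=
    Summable.of_nonneg_of_le (fun m => norm_nonneg _) hterm hgeo
  calc ‖∑' m, Taux x p m‖ ≤ ∑' m, ‖Taux x p m‖ := norm_tsum_le_tsum_norm hnorm
    _ ≤ ∑' m : ℕ, 2 * (1 / 4 : ℝ) ^ m := Summable.tsum_le_tsum hterm hnorm hgeo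
    _ = 2 * (1 - 1 / 4)⁻¹ := by
        rw [tsum_mul_left, tsum_geometric_of_lt_one (by norm_num) (by norm_num)]
    _ ≤ 3 := by norm_num

end RamanujanAux

open RamanujanAux

/-- Ramanujan: `Σ_{n≥0} (q;q²)_n qⁿ / (-q;q²)_{n+1} = f(q⁴)`
where `f(q) = Σ_{n≥0} (-1)ⁿ q^{n(n+1)/2}`. -/
theorem stmt0 (q : ℂ) (hq : ‖q‖ < 1) :
    ∑' n : ℕ, qPoch q (q ^ 2) n * q ^ n / qPoch (-q) (q ^ 2) (n + 1)
      = ∑' n : ℕ, (-1 : ℂ) ^ n * (q ^ 4) ^ (n * (n + 1) / 2) := by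
  have hp : ‖q ^ 2‖ < 1 := by
    rw [norm_pow]
    calc ‖q‖ ^ 2 ≤ ‖q‖ * 1 := by nlinarith [norm_nonneg q]
      _ < 1 := by simpa using hq
  set f : ℕ → ℂ := fun n => (-1 : ℂ) ^ n * (q ^ 4) ^ (n * (n + 1) / 2) with hfdef
  have hf_eq : ∀ n, f n = (-1 : ℂ) ^ n * q ^ (2 * (n * (n + 1))) := by
    intro n
    rw [hfdef]
    simp only
    congr 1
    rw [← pow_mul]
    congr 1
    obtain ⟨k, hk⟩ := Nat.even_mul_succ_self n
    rw [hk]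
    omega
  have hle : ∀ n : ℕ, n ≤ n * (n + 1) / 2 := by
    intro n
    rcases Nat.eq_zero_or_pos n with h | h
    · simp [h]
    · rw [Nat.le_div_iff_mul_le (by norm_num)]
      have h2 : (2 : ℕ) ≤ n + 1 := by omega
      exact Nat.mul_le_mul (le_refl n) h2
  have hq4 : ‖q ^ 4‖ < 1 := by
    rw [norm_pow]
    exact pow_lt_one₀ (norm_nonneg q) hq (by norm_num)
  have hsum : Summable f := by
    apply Summable.of_norm_bounded (g := fun n => ‖q ^ 4‖ ^ n)
      (summable_geometric_of_lt_one (norm_nonneg _) hq4)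
    intro n
    calc ‖f n‖ = ‖(-1 : ℂ)‖ ^ n * ‖q ^ 4‖ ^ (n * (n + 1) / 2) := by
          rw [hfdef]; rw [norm_mul, norm_pow, norm_pow]
      _ = ‖q ^ 4‖ ^ (n * (n + 1) / 2) := by simp
      _ ≤ ‖q ^ 4‖ ^ n := pow_le_pow_of_le_one (norm_nonneg _) hq4.le (hle n)
  have htail : Tendsto
      (fun N => (-1 : ℂ) ^ N * q ^ (2 * (N * (N + 1))) * ∑' m, Taux (q * (q ^ 2) ^ N) (q ^ 2) m)
      atTop (nhds 0) := by
    apply squeeze_zero_norm' (a := fun N => 3 * ‖q‖ ^ N)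
    · have hsmall : Tendsto (fun N : ℕ => ‖q‖ * ‖q ^ 2‖ ^ N) atTop (nhds 0) := by
        have := (tendsto_pow_atTop_nhds_zero_of_lt_one (norm_nonneg (q ^ 2)) hp).const_mul ‖q‖
        simpa using this
      filter_upwards [hsmall.eventually_lt_const (show (0:ℝ) < 1/8 by norm_num),
        eventually_ge_atTop 1] with N hN hN1
      have hxb : ‖q * (q ^ 2) ^ N‖ ≤ 1 / 8 := by
        rw [norm_mul, norm_pow]; exact hN.le
      have hpsi := psi_bound hxb hp.le
      rw [norm_mul, norm_mul, norm_pow, norm_pow, norm_neg, norm_one, one_pow, one_mul]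
      have hNle : N ≤ 2 * (N * (N + 1)) := by nlinarith
      have hqp : ‖q‖ ^ (2 * (N * (N + 1))) ≤ ‖q‖ ^ N :=
        pow_le_pow_of_le_one (norm_nonneg q) hq.le hNle
      calc ‖q‖ ^ (2 * (N * (N + 1))) * ‖∑' m, Taux (q * (q ^ 2) ^ N) (q ^ 2) m‖
          ≤ ‖q‖ ^ N * 3 := by
            apply mul_le_mul hqp hpsi (norm_nonneg _) (by positivity)
        _ = 3 * ‖q‖ ^ N := by ring
    · have := (tendsto_pow_atTop_nhds_zero_of_lt_one (norm_nonneg q) hq).const_mul (3:ℝ)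
      simpa using this
  have hHasSum : HasSum f (∑' m, Taux q (q ^ 2) m) := by
    rw [hsum.hasSum_iff_tendsto_nat]
    have hpart : (fun N => ∑ n ∈ Finset.range N, f n)
        = fun N => (∑' m, Taux q (q ^ 2) m)
            - (-1 : ℂ) ^ N * q ^ (2 * (N * (N + 1))) * ∑' m, Taux (q * (q ^ 2) ^ N) (q ^ 2) m := by
      funext N
      have hc := chain hq N
      have hFsum : ∑ n ∈ Finset.range N, f n
          = ∑ n ∈ Finset.range N, (-1 : ℂ) ^ n * q ^ (2 * (n * (n + 1))) :=
        Finset.sum_congr rfl (fun n _ => hf_eq n)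
      rw [hFsum]
      linear_combination -hc
    rw [hpart]
    simpa using tendsto_const_nhds.sub htail
  exact hHasSum.tsum_eq.symm
end

section
/- For fixed non-negative integers n, k, ℓ, the number of overpartitions π̄ of n−k into exactly ℓ odd parts of size at most 2k+1, with all overlined parts at most 2k−1, equals the number of overpartitions of n−ℓ into exactly k odd parts of size at most 2ℓ+1, with all overlined parts at most 2ℓ−1. -/
/-- `S_{n,k,ℓ}`: overpartitions of `n − k` into exactly `ℓ` odd parts of size at most
`2k+1` with all overlined parts at most `2k−1` (an overpartition is given by its multiset of
parts together with the finset of overlined part sizes). -/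
def overS (n k l : ℕ) : Set (Multiset ℕ × Finset ℕ) :=
  {P | P.1.sum + k = n ∧ P.1.card = l ∧ (∀ x ∈ P.1, Odd x ∧ x ≤ 2 * k + 1) ∧
    ↑P.2 ⊆ P.1.toFinset ∧ ∀ x ∈ P.2, x < 2 * k}

/-- `f A j` = number of parts of `A` strictly greater than `2j+1`. -/
def fC (A : Multiset ℕ) (j : ℕ) : ℕ := A.countP (fun a => 2 * j + 1 < a)

/-- Conjugate of `A` viewed as a 2-modular diagram inside a box of height `k`. -/
def conjO (k : ℕ) (A : Multiset ℕ) : Multiset ℕ :=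
  (Multiset.range k).map (fun j => 2 * fC A j + 1)

/-- Where a mark at part size `v` goes under conjugation. -/
def markO (A : Multiset ℕ) (v : ℕ) : ℕ := 2 * A.countP (fun a => v < a) + 1

/-- The full conjugation map on overpartitions. -/
def Phi (k : ℕ) (P : Multiset ℕ × Finset ℕ) : Multiset ℕ × Finset ℕ :=
  (conjO k P.1, P.2.image (markO P.1))

lemma fC_anti (A : Multiset ℕ) {i j : ℕ} (h : i ≤ j) : fC A j ≤ fC A i := by
  unfold fC
  rw [Multiset.countP_eq_card_filter, Multiset.countP_eq_card_filter]
  exact Multiset.card_le_card (Multiset.monotone_filter_right A (fun a ha => by omega))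

lemma countP_lt_countP {A : Multiset ℕ} {p q : ℕ → Prop} [DecidablePred p] [DecidablePred q]
    (hpq : ∀ a, p a → q a) {x : ℕ} (hx : x ∈ A) (hqx : q x) (hpx : ¬ p x) :
    A.countP p < A.countP q := by
  rw [Multiset.countP_eq_card_filter, Multiset.countP_eq_card_filter]
  apply Multiset.card_lt_card
  refine lt_of_le_of_ne (Multiset.monotone_filter_right A (fun a ha => hpq a ha)) ?_
  intro h
  have : x ∈ A.filter p := h ▸ Multiset.mem_filter.mpr ⟨hx, hqx⟩
  exact hpx (Multiset.mem_filter.mp this).2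

lemma countP_split {p q r : ℕ → Prop} [DecidablePred p] [DecidablePred q] [DecidablePred r] :
    ∀ (A : Multiset ℕ), (∀ a ∈ A, (p a ↔ (q a ∨ r a)) ∧ ¬(q a ∧ r a)) →
      A.countP p = A.countP q + A.countP r := by
  intro A
  induction A using Multiset.induction_on with
  | empty => intro _; simp
  | cons a s ih =>
    intro h
    have ha := h a (Multiset.mem_cons_self a s)
    have hs := ih (fun x hx => h x (Multiset.mem_cons_of_mem hx))
    simp only [Multiset.countP_cons, hs]
    by_cases hq : q a <;> by_cases hr : r a <;> by_cases hp : p a <;> simp_all <;> omega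

lemma range_filter_lt (m l : ℕ) (h : m ≤ l) :
    (Finset.range l).filter (fun i => i < m) = Finset.range m := by
  ext x
  simp only [Finset.mem_filter, Finset.mem_range]
  omega

lemma card_filter_mrange (k : ℕ) (p : ℕ → Prop) [DecidablePred p] :
    Multiset.card (Multiset.filter p (Multiset.range k)) = ((Finset.range k).filter p).card := rfl

/-- A downward-closed subset of `range k` is a `range`. -/
lemma filter_dc_eq_range {k : ℕ} {p : ℕ → Prop} [DecidablePred p]
    (hp : ∀ i j, i ≤ j → p j → p i) :
    (Finset.range k).filter p = Finset.range (((Finset.range k).filter p).card) := by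
  ext x
  simp only [Finset.mem_filter, Finset.mem_range]
  constructor
  · rintro ⟨hxk, hpx⟩
    have hsub : Finset.range (x + 1) ⊆ (Finset.range k).filter p := by
      intro y hy
      have hy' : y ≤ x := by simpa [Nat.lt_succ_iff] using hy
      exact Finset.mem_filter.mpr ⟨Finset.mem_range.mpr (by omega), hp y x hy' hpx⟩
    have := Finset.card_le_card hsub
    simp only [Finset.card_range] at this
    omega
  · intro hx
    constructor
    · by_contra hk
      push_neg at hk
      have hsub : (Finset.range k).filter p ⊆ Finset.range x := by
        intro j hj
        exact Finset.mem_range.mpr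
          (lt_of_lt_of_le (Finset.mem_range.mp (Finset.mem_filter.mp hj).1) hk)
      have := Finset.card_le_card hsub
      simp only [Finset.card_range] at this
      omega
    · by_contra hpx
      have hsub : (Finset.range k).filter p ⊆ Finset.range x := by
        intro j hj
        obtain ⟨hj1, hj2⟩ := Finset.mem_filter.mp hj
        refine Finset.mem_range.mpr ?_
        by_contra hxj
        push_neg at hxj
        exact hpx (hp x j hxj hj2)
      have := Finset.card_le_card hsub
      simp only [Finset.card_range] at this
      omega

lemma lt_filter_dc_card_iff {k t : ℕ} {p : ℕ → Prop} [DecidablePred p]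
    (hp : ∀ i j, i ≤ j → p j → p i) :
    t < ((Finset.range k).filter p).card ↔ t < k ∧ p t := by
  constructor
  · intro ht
    have : t ∈ (Finset.range k).filter p := by
      rw [filter_dc_eq_range hp]; exact Finset.mem_range.mpr ht
    simpa using this
  · rintro ⟨htk, hpt⟩
    have : t ∈ (Finset.range k).filter p := Finset.mem_filter.mpr ⟨Finset.mem_range.mpr htk, hpt⟩
    rw [filter_dc_eq_range hp] at this
    simpa using this

lemma fC_conjO (A : Multiset ℕ) (k i : ℕ) :
    fC (conjO k A) i = ((Finset.range k).filter (fun j => i < fC A j)).card := by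
  show Multiset.countP (fun b => 2 * i + 1 < b)
      (Multiset.map (fun j => 2 * fC A j + 1) (Multiset.range k)) = _
  rw [Multiset.countP_map, card_filter_mrange]
  exact congrArg Finset.card (Finset.filter_congr (fun x _ => by constructor <;> intro <;> omega))

/-- The Galois identity: conjugating twice gives back the counting function. -/
lemma galois {A : Multiset ℕ} {k l : ℕ} (hcard : Multiset.card A = l)
    (hbd : ∀ a ∈ A, a ≤ 2 * k + 1) (t : ℕ) :
    ((Finset.range l).filter (fun i => t < fC (conjO k A) i)).card = fC A t := by
  have hdc : ∀ i j, i ≤ j → (fun j' => (i : ℕ) < fC A j') j → (fun j' => i < fC A j') i := by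
    intro i j hij hj
    exact lt_of_lt_of_le hj (fC_anti A hij)
  by_cases htk : t < k
  · have key : ∀ i, (t < fC (conjO k A) i ↔ i < fC A t) := by
      intro i
      rw [fC_conjO]
      rw [lt_filter_dc_card_iff (fun i' j' h hj => lt_of_lt_of_le hj (fC_anti A h))]
      constructor
      · rintro ⟨_, h⟩; exact h
      · intro h; exact ⟨htk, h⟩
    rw [Finset.filter_congr (fun i _ => by rw [key i])]
    rw [range_filter_lt _ _ (hcard ▸ Multiset.countP_le_card _ A)]
    exact Finset.card_range _
  · have hz : fC A t = 0 := by
      rw [fC, Multiset.countP_eq_zero]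
      intro a ha
      have := hbd a ha
      omega
    rw [hz]
    rw [Finset.card_eq_zero, Finset.filter_eq_empty_iff]
    intro i _
    rw [fC_conjO]
    have : ((Finset.range k).filter (fun j => i < fC A j)).card ≤ k := by
      calc ((Finset.range k).filter (fun j => i < fC A j)).card
          ≤ (Finset.range k).card := Finset.card_filter_le _ _
        _ = k := Finset.card_range k
    omega

lemma twice_sum_fC (k : ℕ) :
    ∀ (A : Multiset ℕ), (∀ a ∈ A, Odd a ∧ a ≤ 2 * k + 1) →
      2 * (∑ j ∈ Finset.range k, fC A j) + Multiset.card A = A.sum := by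
  intro A
  induction A using Multiset.induction_on with
  | empty => intro _; simp [fC]
  | cons a s ih =>
    intro hbd
    obtain ⟨⟨u, hu⟩, hle⟩ := hbd a (Multiset.mem_cons_self a s)
    have hs := ih (fun x hx => hbd x (Multiset.mem_cons_of_mem hx))
    have hfc : ∀ j, fC (a ::ₘ s) j = fC s j + if 2 * j + 1 < a then 1 else 0 := by
      intro j; exact Multiset.countP_cons _ a s
    have hsum : ∑ j ∈ Finset.range k, fC (a ::ₘ s) j
        = (∑ j ∈ Finset.range k, fC s j) + ∑ j ∈ Finset.range k, (if 2 * j + 1 < a then 1 else 0) := by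
      simp only [hfc]
      rw [Finset.sum_add_distrib]
    have huk : u ≤ k := by omega
    have hcount : ∑ j ∈ Finset.range k, (if 2 * j + 1 < a then (1 : ℕ) else 0) = u := by
      have h1 : ∀ j, (if 2 * j + 1 < a then (1 : ℕ) else 0) = if j < u then 1 else 0 := by
        intro j; exact if_congr (by omega) rfl rfl
      simp only [h1]
      rw [← Finset.sum_filter]
      rw [range_filter_lt u k huk]
      simp
    rw [Multiset.sum_cons, Multiset.card_cons, hsum, hcount]
    omega

lemma countP_lt_card_of_mem {A : Multiset ℕ} {v : ℕ} (hv : v ∈ A) :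
    A.countP (fun a => v < a) < Multiset.card A := by
  have h := Multiset.card_eq_countP_add_countP (fun a => v < a) A
  have hpos : 0 < A.countP (fun a => ¬ v < a) :=
    Multiset.countP_pos.mpr ⟨v, hv, by omega⟩
  omega

lemma Phi_mem {n k l : ℕ} {P : Multiset ℕ × Finset ℕ} (hP : P ∈ overS n k l) :
    Phi k P ∈ overS n l k := by
  obtain ⟨A, S⟩ := P
  obtain ⟨hsum, hcard, hodd, hsub, hlt⟩ := hP
  simp only [overS, Set.mem_setOf_eq, Phi] at *
  have hfc_le : ∀ j, fC A j ≤ l := fun j => hcard ▸ Multiset.countP_le_card _ A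
  refine ⟨?_, ?_, ?_, ?_, ?_⟩
  · -- sum condition
    have h1 := twice_sum_fC k A hodd
    have h2 : (conjO k A).sum = 2 * (∑ j ∈ Finset.range k, fC A j) + k := by
      show (Multiset.map (fun j => 2 * fC A j + 1) (Finset.range k).val).sum = _
      rw [show (Multiset.map (fun j => 2 * fC A j + 1) (Finset.range k).val).sum
          = ∑ j ∈ Finset.range k, (2 * fC A j + 1) from rfl]
      rw [Finset.sum_add_distrib, ← Finset.mul_sum]
      simp
    omega
  · simp [conjO]
  · intro b hb
    obtain ⟨j, hj, rfl⟩ := Multiset.mem_map.mp hb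
    exact ⟨⟨fC A j, rfl⟩, by have := hfc_le j; omega⟩
  · intro x hx
    rw [Finset.mem_image] at hx
    obtain ⟨v, hvS, rfl⟩ := hx
    have hvA : v ∈ A := Multiset.mem_toFinset.mp (hsub hvS)
    obtain ⟨u, hu⟩ := (hodd v hvA).1
    have huk : u < k := by have := hlt v hvS; omega
    subst hu
    rw [Multiset.mem_toFinset]
    exact Multiset.mem_map.mpr ⟨u, Multiset.mem_range.mpr huk, rfl⟩
  · intro x hx
    rw [Finset.mem_image] at hx
    obtain ⟨v, hvS, rfl⟩ := hx
    have hvA : v ∈ A := Multiset.mem_toFinset.mp (hsub hvS)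
    have := countP_lt_card_of_mem hvA
    unfold markO
    omega

lemma conjO_conjO {k l : ℕ} {A : Multiset ℕ} (hcard : Multiset.card A = l)
    (hodd : ∀ a ∈ A, Odd a ∧ a ≤ 2 * k + 1) : conjO l (conjO k A) = A := by
  have hbd : ∀ a ∈ A, a ≤ 2 * k + 1 := fun a ha => (hodd a ha).2
  set B := conjO k A with hB
  ext v
  rcases Nat.even_or_odd v with hv | hv
  · -- even values occur in neither side
    have h1 : Multiset.count v (conjO l B) = 0 := by
      rw [Multiset.count_eq_zero]
      intro hmem
      obtain ⟨i, _, hi⟩ := Multiset.mem_map.mp hmem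
      obtain ⟨m, hm⟩ := hv
      omega
    have h2 : Multiset.count v A = 0 := by
      rw [Multiset.count_eq_zero]
      intro hmem
      obtain ⟨m, hm⟩ := (hodd v hmem).1
      obtain ⟨m', hm'⟩ := hv
      omega
    rw [h1, h2]
  · obtain ⟨u, rfl⟩ := hv
    -- count in the double conjugate
    have hcountC : Multiset.count (2 * u + 1) (conjO l B)
        = ((Finset.range l).filter (fun i => fC B i = u)).card := by
      unfold conjO
      rw [Multiset.count_map, card_filter_mrange]
      exact congrArg Finset.card
        (Finset.filter_congr (fun i _ => by constructor <;> intro <;> omega))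
    -- count in A via countP
    have hcountA : Multiset.count (2 * u + 1) A = A.countP (fun a => a = 2 * u + 1) := by
      rw [Multiset.count]
      exact Multiset.countP_congr rfl
        (fun a _ => propext (by constructor <;> intro h <;> omega))
    rcases Nat.eq_zero_or_pos u with rfl | hu
    · -- u = 0
      have hfil1 : ((Finset.range l).filter (fun i => fC B i = 0))
          = ((Finset.range l).filter (fun i => ¬ (0 < fC B i))) :=
        Finset.filter_congr (fun i _ => by omega)
      have htot : ((Finset.range l).filter (fun i => ¬ (0 < fC B i))).card
          + ((Finset.range l).filter (fun i => 0 < fC B i)).card = l := by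
        rw [add_comm, Finset.card_filter_add_card_filter_not, Finset.card_range]
      have hg0 : ((Finset.range l).filter (fun i => 0 < fC B i)).card = fC A 0 :=
        galois hcard hbd 0
      have hA0 : A.countP (fun a => a = 2 * 0 + 1) + fC A 0 = l := by
        have := countP_split (p := fun _ => True) (q := fun a => a = 2*0+1)
          (r := fun a => 2*0+1 < a) A (fun a ha => by
            obtain ⟨m, hm⟩ := (hodd a ha).1
            constructor
            · constructor
              · intro _; omega
              · intro _; trivial
            · omega)
        rw [Multiset.countP_True] at this
        rw [← hcard, this]
        rfl
      have h2 : Multiset.count (2 * 0 + 1) (conjO l B) + fC A 0 = l := by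
        rw [hcountC, hfil1, ← hg0, htot]
      omega
    · -- u ≥ 1
      obtain ⟨w, rfl⟩ : ∃ w, u = w + 1 := ⟨u - 1, by omega⟩
      have hsplit : ((Finset.range l).filter (fun i => w < fC B i)).card
          = ((Finset.range l).filter (fun i => fC B i = w + 1)).card
          + ((Finset.range l).filter (fun i => w + 1 < fC B i)).card := by
        rw [← Finset.card_union_of_disjoint (by
          rw [Finset.disjoint_left]
          intro x hx1 hx2
          simp only [Finset.mem_filter] at hx1 hx2
          omega)]
        rw [← Finset.filter_or]
        congr 1
        exact Finset.filter_congr (fun i _ => by omega)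
      have hgw : ((Finset.range l).filter (fun i => w < fC B i)).card = fC A w :=
        galois hcard hbd w
      have hgw1 : ((Finset.range l).filter (fun i => w + 1 < fC B i)).card = fC A (w + 1) :=
        galois hcard hbd (w + 1)
      have hAsplit : fC A w = A.countP (fun a => a = 2 * (w + 1) + 1) + fC A (w + 1) := by
        unfold fC
        exact countP_split A (fun a ha => by
          obtain ⟨m, hm⟩ := (hodd a ha).1
          constructor
          · constructor <;> intro <;> omega
          · omega)
      rw [hcountC, hcountA]
      omega

lemma mark_round {A : Multiset ℕ} {k : ℕ} (hodd : ∀ a ∈ A, Odd a ∧ a ≤ 2 * k + 1)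
    {v : ℕ} (hv : v ∈ A) (hlt : v < 2 * k) :
    markO (conjO k A) (markO A v) = v := by
  obtain ⟨u, rfl⟩ := (hodd v hv).1
  have huk : u < k := by omega
  have hmark : markO A (2 * u + 1) = 2 * fC A u + 1 := by
    unfold markO fC
    congr 1
  have hcount : (conjO k A).countP (fun b => 2 * fC A u + 1 < b)
      = ((Finset.range k).filter (fun j => fC A u < fC A j)).card := by
    unfold conjO
    rw [Multiset.countP_map, card_filter_mrange]
    exact congrArg Finset.card
      (Finset.filter_congr (fun j _ => by constructor <;> intro <;> omega))
  have hkey : ∀ j, j < k → (fC A u < fC A j ↔ j < u) := by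
    intro j _
    constructor
    · intro h
      by_contra hju
      push_neg at hju
      exact absurd (fC_anti A hju) (by omega)
    · intro hju
      have h1 : fC A j < A.countP (fun a => 2 * j + 1 < a) + 1 := by unfold fC; omega
      have hstrict : fC A (u) < fC A j := by
        unfold fC
        exact countP_lt_countP (fun a h => by omega) hv (by omega) (by omega)
      exact hstrict
  have hfil : ((Finset.range k).filter (fun j => fC A u < fC A j)) = Finset.range u := by
    rw [Finset.filter_congr (fun j hj => by rw [hkey j (Finset.mem_range.mp hj)])]
    exact range_filter_lt u k (le_of_lt huk)
  rw [hmark]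
  unfold markO
  rw [hcount, hfil, Finset.card_range]

lemma Phi_Phi {n k l : ℕ} {P : Multiset ℕ × Finset ℕ} (hP : P ∈ overS n k l) :
    Phi l (Phi k P) = P := by
  obtain ⟨A, S⟩ := P
  obtain ⟨hsum, hcard, hodd, hsub, hlt⟩ := hP
  simp only [Phi]
  refine Prod.ext ?_ ?_
  · exact conjO_conjO hcard hodd
  · show (S.image (markO A)).image (markO (conjO k A)) = S
    rw [Finset.image_image]
    have heq : ∀ v ∈ S, (markO (conjO k A) ∘ markO A) v = v := by
      intro v hv
      exact mark_round hodd (Multiset.mem_toFinset.mp (hsub hv)) (hlt v hv)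
    rw [Finset.image_congr heq]
    exact Finset.image_id

lemma Phi_image (n k l : ℕ) : Phi k '' overS n k l = overS n l k := by
  apply Set.Subset.antisymm
  · rintro _ ⟨P, hP, rfl⟩
    exact Phi_mem hP
  · intro Q hQ
    exact ⟨Phi l Q, Phi_mem hQ, Phi_Phi hQ⟩

/-- `|S_{n,k,ℓ}| = |S_{n,ℓ,k}|`. -/
theorem stmt3 (n k l : ℕ) : (overS n k l).ncard = (overS n l k).ncard := by
  have hinj : Set.InjOn (Phi k) (overS n k l) := by
    intro P hP Q hQ h
    rw [← Phi_Phi hP, ← Phi_Phi hQ, h]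
  calc (overS n k l).ncard = (Phi k '' overS n k l).ncard :=
        (Set.ncard_image_of_injOn hinj).symm
    _ = (overS n l k).ncard := by rw [Phi_image]
end

section
/- Conjugation of boxed 2-modular diagrams gives a weight-reversing involution on pairs (k, π̄) ∈ P_n with k + ν(π̄) ≡ 1 (mod 2); consequently the total signed count Σ_{(k,π̄): k+ν(π̄) odd} (−1)^{ν(π̄)} over such pairs is zero for every n. -/
/-- `(k, π̄) ∈ P_n`: `π̄` is an overpartition of `n − k` into odd parts of size at most
`2k+1` with all overlined parts at most `2k−1`. -/
def IsValidPair (n k : ℕ) (P : Multiset ℕ × Finset ℕ) : Prop :=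
  P.1.sum + k = n ∧ (∀ x ∈ P.1, Odd x ∧ x ≤ 2 * k + 1) ∧
    ↑P.2 ⊆ P.1.toFinset ∧ ∀ x ∈ P.2, x < 2 * k

/-- Pairs of `P_n` with `k + ν(π̄) ≡ 1 (mod 2)`. -/
def oddSet (n : ℕ) : Set (ℕ × (Multiset ℕ × Finset ℕ)) :=
  {p | IsValidPair n p.1 p.2 ∧ Odd (p.1 + p.2.1.card)}

/-! ### Auxiliary material: conjugation of boxed 2-modular diagrams -/

/-- Conjugation of boxed 2-modular diagrams. -/
def conj (p : ℕ × (Multiset ℕ × Finset ℕ)) : ℕ × (Multiset ℕ × Finset ℕ) :=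
  (p.2.1.card,
   ((Multiset.range p.1).map (fun j => 2 * (p.2.1.filter (fun x => 2 * j + 3 ≤ x)).card + 1),
    p.2.2.image (fun x => 2 * (p.2.1.filter (fun y => x < y)).card + 1)))

/-- The number of parts of `π` that are `≥ 2j+3`. -/
def cfun (π : Multiset ℕ) (j : ℕ) : ℕ := (π.filter (fun x => 2 * j + 3 ≤ x)).card

/-- The conjugate multiset of parts. -/
def conjM (k : ℕ) (π : Multiset ℕ) : Multiset ℕ :=
  (Multiset.range k).map (fun j => 2 * cfun π j + 1)

lemma conj_eq (k : ℕ) (π : Multiset ℕ) (S : Finset ℕ) :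
    conj (k, (π, S)) = (π.card, (conjM k π,
      S.image (fun x => 2 * (π.filter (fun y => x < y)).card + 1))) := rfl

lemma cfun_anti (π : Multiset ℕ) {a b : ℕ} (hab : a ≤ b) : cfun π b ≤ cfun π a :=
  Multiset.card_le_card (Multiset.monotone_filter_right π (fun x _ => by omega))

lemma cfun_le (π : Multiset ℕ) (j : ℕ) : cfun π j ≤ π.card :=
  Multiset.card_le_card (Multiset.filter_le _ π)

lemma conjM_card (k : ℕ) (π : Multiset ℕ) : (conjM k π).card = k := by
  simp [conjM]

lemma conjM_filter_card (k : ℕ) (π : Multiset ℕ) (q : ℕ → Prop) [DecidablePred q] :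
    ((conjM k π).filter q).card
      = ((Finset.range k).filter (fun j => q (2 * cfun π j + 1))).card := by
  rw [conjM, Multiset.filter_map, Multiset.card_map]
  rfl

lemma Fsplit (s : Multiset ℕ) (v : ℕ) :
    (s.filter (fun x => v ≤ x)).card = s.count v + (s.filter (fun x => v + 1 ≤ x)).card := by
  induction s using Multiset.induction with
  | empty => simp
  | cons a s ih =>
    simp only [Multiset.filter_cons, Multiset.count_cons, Multiset.card_add,
      apply_ite Multiset.card]
    split_ifs <;> simp_all <;> omega

lemma ext_of_filter_ge (s t : Multiset ℕ)
    (h : ∀ m, (s.filter (fun x => m ≤ x)).card = (t.filter (fun x => m ≤ x)).card) : s = t := by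
  rw [Multiset.ext]
  intro v
  have h1 := Fsplit s v
  have h2 := Fsplit t v
  have h3 := h v
  have h4 := h (v + 1)
  omega

lemma filter_range_card_threshold (e : ℕ → ℕ) (he : ∀ a b : ℕ, a ≤ b → e b ≤ e a)
    (k t u : ℕ) : 1 ≤ u →
    (u ≤ ((Finset.range k).filter (fun j => t ≤ e j)).card ↔ u ≤ k ∧ t ≤ e (u - 1)) := by
  intro hu
  constructor
  · intro h
    have hk : ((Finset.range k).filter (fun j => t ≤ e j)).card ≤ k :=
      le_trans (Finset.card_filter_le _ _) (by simp)
    refine ⟨le_trans h hk, ?_⟩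
    by_contra hlt
    push_neg at hlt
    have hsub : (Finset.range k).filter (fun j => t ≤ e j) ⊆ Finset.range (u - 1) := by
      intro j hj
      simp only [Finset.mem_filter, Finset.mem_range] at hj ⊢
      by_contra hge
      push_neg at hge
      exact absurd (le_trans hj.2 (he (u - 1) j hge)) (by omega)
    have := Finset.card_le_card hsub
    simp only [Finset.card_range] at this
    omega
  · rintro ⟨hk, ht⟩
    have hsub : Finset.range u ⊆ (Finset.range k).filter (fun j => t ≤ e j) := by
      intro j hj
      simp only [Finset.mem_range, Finset.mem_filter] at *
      exact ⟨lt_of_lt_of_le hj hk, le_trans ht (he j (u - 1) (by omega))⟩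
    calc u = (Finset.range u).card := (Finset.card_range u).symm
      _ ≤ _ := Finset.card_le_card hsub

lemma main_count (π : Multiset ℕ) (k u : ℕ) (hu : 1 ≤ u)
    (hbound : ∀ x ∈ π, x ≤ 2 * k + 1) :
    ((Finset.range π.card).filter
      (fun i => u ≤ ((Finset.range k).filter (fun j => i + 1 ≤ cfun π j)).card)).card
      = cfun π (u - 1) := by
  by_cases hk : u ≤ k
  · have h1 : (Finset.range π.card).filter
        (fun i => u ≤ ((Finset.range k).filter (fun j => i + 1 ≤ cfun π j)).card)
        = (Finset.range π.card).filter (fun i => i < cfun π (u - 1)) := by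
      apply Finset.filter_congr
      intro i _
      rw [filter_range_card_threshold (cfun π) (fun a b hab => cfun_anti π hab) k (i + 1) u hu]
      constructor
      · rintro ⟨_, h⟩; omega
      · intro h; exact ⟨hk, by omega⟩
    rw [h1]
    have h2 : (Finset.range π.card).filter (fun i => i < cfun π (u - 1))
        = Finset.range (min (cfun π (u - 1)) π.card) := by
      ext j
      simp only [Finset.mem_filter, Finset.mem_range, lt_min_iff]
      omega
    rw [h2, Finset.card_range, min_eq_left (cfun_le π (u - 1))]
  · have hz : cfun π (u - 1) = 0 := by
      have h0 : π.filter (fun x => 2 * (u - 1) + 3 ≤ x) = 0 :=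
        Multiset.filter_eq_nil.2 (fun x hx => by have := hbound x hx; omega)
      simp [cfun, h0]
    rw [hz]
    have h1 : (Finset.range π.card).filter
        (fun i => u ≤ ((Finset.range k).filter (fun j => i + 1 ≤ cfun π j)).card)
        = ∅ := by
      apply Finset.filter_false_of_mem
      intro i _
      rw [filter_range_card_threshold (cfun π) (fun a b hab => cfun_anti π hab) k (i + 1) u hu]
      omega
    rw [h1, Finset.card_empty]

lemma two_mul_halves (s : Multiset ℕ) (h : ∀ x ∈ s, x % 2 = 1) :
    2 * (s.map (fun x => (x - 1) / 2)).sum + s.card = s.sum := by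
  induction s using Multiset.induction with
  | empty => simp
  | cons a s ih =>
    simp only [Multiset.map_cons, Multiset.sum_cons, Multiset.card_cons]
    have ha := h a (Multiset.mem_cons_self a s)
    have := ih (fun x hx => h x (Multiset.mem_cons_of_mem hx))
    omega

lemma sum_c (k : ℕ) (s : Multiset ℕ) :
    ∑ j ∈ Finset.range k, (s.filter (fun x => 2 * j + 3 ≤ x)).card
      = (s.map (fun x => min ((x - 1) / 2) k)).sum := by
  induction s using Multiset.induction with
  | empty => simp
  | cons a s ih =>
    simp only [Multiset.filter_cons, Multiset.card_add, apply_ite Multiset.card,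
      Multiset.map_cons, Multiset.sum_cons, Finset.sum_add_distrib, ih]
    congr 1
    have h1 : (∑ x ∈ Finset.range k,
          if 2 * x + 3 ≤ a then Multiset.card ({a} : Multiset ℕ)
          else Multiset.card (0 : Multiset ℕ))
        = ((Finset.range k).filter (fun j => 2 * j + 3 ≤ a)).card := by
      rw [Finset.card_filter]
      simp
    rw [h1]
    have h2 : (Finset.range k).filter (fun j => 2 * j + 3 ≤ a)
        = Finset.range (min ((a - 1) / 2) k) := by
      ext j
      simp only [Finset.mem_filter, Finset.mem_range, lt_min_iff]
      omega
    rw [h2, Finset.card_range]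

lemma conjM_sum (k : ℕ) (π : Multiset ℕ)
    (hodd : ∀ x ∈ π, x % 2 = 1) (hle : ∀ x ∈ π, x ≤ 2 * k + 1) :
    (conjM k π).sum + π.card = π.sum + k := by
  have h0 : (conjM k π).sum = ∑ j ∈ Finset.range k, (2 * cfun π j + 1) := rfl
  rw [h0, Finset.sum_add_distrib, ← Finset.mul_sum]
  simp only [Finset.sum_const, Finset.card_range, smul_eq_mul, mul_one]
  have h1 : ∑ j ∈ Finset.range k, cfun π j
      = (π.map (fun x => min ((x - 1) / 2) k)).sum := sum_c k π
  have h2 : (π.map (fun x => min ((x - 1) / 2) k)) = π.map (fun x => (x - 1) / 2) := by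
    apply Multiset.map_congr rfl
    intro x hx
    have h3 := hle x hx
    have h4 : (x - 1) / 2 ≤ k := by omega
    omega
  have h3 := two_mul_halves π hodd
  rw [h1, h2]
  omega

lemma conjM_conjM (k : ℕ) (π : Multiset ℕ) (hodd : ∀ x ∈ π, x % 2 = 1)
    (hle : ∀ x ∈ π, x ≤ 2 * k + 1) :
    conjM π.card (conjM k π) = π := by
  apply ext_of_filter_ge
  intro m
  rw [conjM_filter_card]
  have hd : ∀ i : ℕ, cfun (conjM k π) i
      = ((Finset.range k).filter (fun j => i + 1 ≤ cfun π j)).card := by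
    intro i
    rw [cfun, conjM_filter_card]
    congr 1
    apply Finset.filter_congr
    intro j _
    constructor <;> (intro h; omega)
  by_cases hm : m ≤ 1
  · have h1 : (Finset.range π.card).filter (fun i => m ≤ 2 * cfun (conjM k π) i + 1)
        = Finset.range π.card :=
      Finset.filter_true_of_mem (fun i _ => by omega)
    have h2 : π.filter (fun x => m ≤ x) = π :=
      Multiset.filter_eq_self.2 (fun x hx => by have := hodd x hx; omega)
    rw [h1, h2, Finset.card_range]
  · push_neg at hm
    have hu : 1 ≤ m / 2 := by omega
    have h1 : (Finset.range π.card).filter (fun i => m ≤ 2 * cfun (conjM k π) i + 1)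
        = (Finset.range π.card).filter
            (fun i => m / 2 ≤ ((Finset.range k).filter (fun j => i + 1 ≤ cfun π j)).card) := by
      apply Finset.filter_congr
      intro i _
      rw [hd i]
      constructor <;> (intro h; omega)
    rw [h1, main_count π k (m / 2) hu hle]
    have h2 : π.filter (fun x => m ≤ x) = π.filter (fun x => 2 * (m / 2 - 1) + 3 ≤ x) := by
      apply Multiset.filter_congr
      intro x hx
      have := hodd x hx
      constructor <;> (intro h; omega)
    rw [h2]
    rfl

lemma overline_eq (k : ℕ) (π : Multiset ℕ) (hodd : ∀ x ∈ π, x % 2 = 1)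
    (x : ℕ) (hx : x ∈ π) :
    (π.filter (fun y => x < y)).card = cfun π (x / 2) := by
  have hxodd := hodd x hx
  rw [cfun]
  congr 1
  apply Multiset.filter_congr
  intro y hy
  have := hodd y hy
  constructor <;> (intro h; omega)

lemma overline_roundtrip (k : ℕ) (π : Multiset ℕ) (hodd : ∀ x ∈ π, x % 2 = 1)
    (x : ℕ) (hx : x ∈ π) (hxlt : x < 2 * k) :
    2 * ((conjM k π).filter
        (fun z => 2 * (π.filter (fun y => x < y)).card + 1 < z)).card + 1 = x := by
  have hxodd := hodd x hx
  have hv : x / 2 < k := by omega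
  rw [overline_eq k π hodd x hx, conjM_filter_card]
  have key : (Finset.range k).filter (fun j => 2 * cfun π (x / 2) + 1 < 2 * cfun π j + 1)
      = Finset.range (x / 2) := by
    ext j
    simp only [Finset.mem_filter, Finset.mem_range]
    constructor
    · rintro ⟨hjk, hlt⟩
      by_contra hge
      push_neg at hge
      have := cfun_anti π hge
      omega
    · intro hj
      refine ⟨lt_trans hj hv, ?_⟩
      have h1 : (π.filter (fun y => x ≤ y)).card ≤ cfun π j := by
        rw [cfun]
        apply Multiset.card_le_card
        apply Multiset.monotone_filter_right
        intro y _
        omega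
      have h2 := Fsplit π x
      have h3 : cfun π (x / 2) ≤ (π.filter (fun y => x + 1 ≤ y)).card := by
        rw [cfun]
        apply Multiset.card_le_card
        apply Multiset.monotone_filter_right
        intro y _
        omega
      have h4 : 1 ≤ π.count x := Multiset.one_le_count_iff_mem.2 hx
      omega
  rw [key, Finset.card_range]
  omega

lemma conj_mem {n : ℕ} {p : ℕ × (Multiset ℕ × Finset ℕ)} (hp : p ∈ oddSet n) :
    conj p ∈ oddSet n := by
  obtain ⟨k, π, S⟩ := p
  obtain ⟨⟨hsum, hparts, hsub, hov⟩, hodd⟩ := hp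
  have hxodd : ∀ x ∈ π, x % 2 = 1 := fun x hx => Nat.odd_iff.1 (hparts x hx).1
  have hxle : ∀ x ∈ π, x ≤ 2 * k + 1 := fun x hx => (hparts x hx).2
  rw [conj_eq]
  refine ⟨⟨?_, ?_, ?_, ?_⟩, ?_⟩
  · -- sum
    have := conjM_sum k π hxodd hxle
    simp only at hsum ⊢
    omega
  · -- parts odd and bounded
    intro y hy
    simp only at hy
    rw [conjM] at hy
    obtain ⟨j, _, rfl⟩ := Multiset.mem_map.1 hy
    refine ⟨⟨cfun π j, by ring⟩, ?_⟩
    have := cfun_le π j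
    omega
  · -- overline subset
    intro y hy
    replace hy : y ∈ S.image (fun x => 2 * (π.filter (fun y => x < y)).card + 1) := hy
    obtain ⟨x, hxS, rfl⟩ := Finset.mem_image.1 hy
    have hxπ : x ∈ π := by
      have := hsub hxS
      simpa [Multiset.mem_toFinset] using this
    have hxlt : x < 2 * k := hov x hxS
    show (2 * (π.filter (fun y => x < y)).card + 1) ∈ (conjM k π).toFinset
    rw [Multiset.mem_toFinset, overline_eq k π hxodd x hxπ]
    rw [conjM]
    refine Multiset.mem_map.2 ⟨x / 2, ?_, rfl⟩
    rw [Multiset.mem_range]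
    have := hxodd x hxπ
    omega
  · -- overlines bounded
    intro y hy
    replace hy : y ∈ S.image (fun x => 2 * (π.filter (fun y => x < y)).card + 1) := hy
    obtain ⟨x, hxS, rfl⟩ := Finset.mem_image.1 hy
    have hxπ : x ∈ π := by
      have := hsub hxS
      simpa [Multiset.mem_toFinset] using this
    have hsplit := congrArg Multiset.card (Multiset.filter_add_not (fun y => x < y) π)
    rw [Multiset.card_add] at hsplit
    have hxmem : x ∈ π.filter (fun y => ¬ x < y) :=
      Multiset.mem_filter.2 ⟨hxπ, lt_irrefl x⟩
    have hpos : 1 ≤ (π.filter (fun y => ¬ x < y)).card := by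
      rcases Multiset.card_pos_iff_exists_mem.2 ⟨x, hxmem⟩ with h
      omega
    simp only
    omega
  · -- parity
    simp only [conjM_card]
    rw [Nat.odd_iff] at hodd ⊢
    simp only at hodd
    omega

lemma conj_conj {n : ℕ} {p : ℕ × (Multiset ℕ × Finset ℕ)} (hp : p ∈ oddSet n) :
    conj (conj p) = p := by
  obtain ⟨k, π, S⟩ := p
  obtain ⟨⟨hsum, hparts, hsub, hov⟩, hodd⟩ := hp
  have hxodd : ∀ x ∈ π, x % 2 = 1 := fun x hx => Nat.odd_iff.1 (hparts x hx).1
  have hxle : ∀ x ∈ π, x ≤ 2 * k + 1 := fun x hx => (hparts x hx).2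
  have h3 : ((S.image (fun x => 2 * (π.filter (fun y => x < y)).card + 1)).image
      (fun x => 2 * ((conjM k π).filter (fun y => x < y)).card + 1)) = S := by
    rw [Finset.image_image]
    have hcg : ∀ x ∈ S, ((fun x => 2 * ((conjM k π).filter (fun y => x < y)).card + 1) ∘
        (fun x => 2 * (π.filter (fun y => x < y)).card + 1)) x = id x := by
      intro x hxS
      have hxπ : x ∈ π := by
        have := hsub hxS
        simpa [Multiset.mem_toFinset] using this
      exact overline_roundtrip k π hxodd x hxπ (hov x hxS)
    rw [Finset.image_congr hcg, Finset.image_id]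
  calc conj (conj (k, (π, S)))
      = conj (π.card, (conjM k π,
          S.image (fun x => 2 * (π.filter (fun y => x < y)).card + 1))) :=
            congrArg conj (conj_eq k π S)
    _ = ((conjM k π).card, (conjM π.card (conjM k π),
          (S.image (fun x => 2 * (π.filter (fun y => x < y)).card + 1)).image
            (fun x => 2 * ((conjM k π).filter (fun y => x < y)).card + 1))) := conj_eq _ _ _
    _ = (k, (π, S)) := by
          rw [conjM_card, conjM_conjM k π hxodd hxle, h3]

lemma conj_fst_card {p : ℕ × (Multiset ℕ × Finset ℕ)} : (conj p).2.1.card = p.1 := by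
  obtain ⟨k, π, S⟩ := p
  rw [conj_eq]
  exact conjM_card k π

/-- Conjugation of boxed 2-modular diagrams gives a weight-reversing involution on the pairs
`(k, π̄) ∈ P_n` with `k + ν(π̄)` odd; consequently the signed count over such pairs vanishes. -/
theorem stmt12 (n : ℕ) :
    (∃ f : ℕ × (Multiset ℕ × Finset ℕ) → ℕ × (Multiset ℕ × Finset ℕ),
      (∀ p ∈ oddSet n, f p ∈ oddSet n) ∧ (∀ p ∈ oddSet n, f (f p) = p) ∧
        ∀ p ∈ oddSet n, Even (f p).2.1.card ↔ ¬ Even p.2.1.card)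
    ∧ ({p ∈ oddSet n | Even p.2.1.card}.ncard : ℤ)
        - {p ∈ oddSet n | Odd p.2.1.card}.ncard = 0 := by
  have hparity : ∀ p ∈ oddSet n, (Even (conj p).2.1.card ↔ ¬ Even p.2.1.card) := by
    intro p hp
    rw [conj_fst_card]
    have hodd := hp.2
    rw [Nat.odd_iff] at hodd
    rw [Nat.even_iff, Nat.even_iff]
    omega
  constructor
  · exact ⟨conj, fun p hp => conj_mem hp, fun p hp => conj_conj hp, hparity⟩
  · have hBA : {p ∈ oddSet n | Odd p.2.1.card} = conj '' {p ∈ oddSet n | Even p.2.1.card} := by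
      ext q
      simp only [Set.mem_setOf_eq, Set.mem_image]
      constructor
      · rintro ⟨hq, hoddq⟩
        refine ⟨conj q, ⟨conj_mem hq, ?_⟩, conj_conj hq⟩
        rw [conj_fst_card]
        have h5 : Odd (q.1 + q.2.1.card) := hq.2
        rw [Nat.odd_iff] at h5 hoddq
        rw [Nat.even_iff]
        omega
      · rintro ⟨p, ⟨hp, hev⟩, rfl⟩
        refine ⟨conj_mem hp, ?_⟩
        rw [conj_fst_card]
        have h5 : Odd (p.1 + p.2.1.card) := hp.2
        rw [Nat.odd_iff] at h5 ⊢
        rw [Nat.even_iff] at hev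
        omega
    have hinj : Set.InjOn conj {p ∈ oddSet n | Even p.2.1.card} := by
      intro p hp q hq h
      have := conj_conj hp.1
      rw [h, conj_conj hq.1] at this
      exact this.symm
    rw [hBA, Set.ncard_image_of_injOn hinj]
    simp
end
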